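/- Let X be a compact metric space, T : X → X a continuous map, and φ : X → ℝ a continuous function. Let m be a Borel probability measure conformal for (T, φ), let μ be a T-invariant Borel probability measure equivalent to m, and suppose the Radon–Nikodym density f = dm/dμ has a continuous version f : X → ℝ. Let A ⊆ X be a Borel set such that T restricted to A is injective, T(A) is Borel, and μ(∂A) = 0 and μ(∂(T(A))) = 0. Then for every point x ∈ X that is generic for μ, both limits lim_{n→∞} (1/n) Σ_{k=0}^{n-1} f(T^k(x)) · 1_{T(A)}(T^k(x)) and lim_{n→∞} (1/n) Σ_{k=0}^{n-1} exp(φ(T^k(x))) · f(T^k(x)) · 1_A(T^k(x)) exist and are equal, their common value being m(T(A)). -/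

import Mathlib

open MeasureTheory Filter Topology

/-- A Borel measure `m` is conformal for `(T, φ)` if `m(T(A)) = ∫_A e^φ dm` for every
Borel set `A` on which `T` is injective and whose image is Borel. -/
def IsConformal {X : Type*} [MeasurableSpace X]
    (T : X → X) (φ : X → ℝ) (m : Measure X) : Prop :=
  ∀ A : Set X, MeasurableSet A → Set.InjOn T A → MeasurableSet (T '' A) →
    (m (T '' A)).toReal = ∫ x in A, Real.exp (φ x) ∂m

/-- A point `x` is generic for the Borel probability measure `ν` under the map `T` if the
Birkhoff averages of every continuous function along the orbit of `x` converge to the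
integral with respect to `ν`. -/
def IsGeneric {X : Type*} [TopologicalSpace X] [MeasurableSpace X]
    (T : X → X) (ν : Measure X) (x : X) : Prop :=
  ∀ h : X → ℝ, Continuous h →
    Tendsto (fun n : ℕ => (1 / (n : ℝ)) * ∑ k ∈ Finset.range n, h (T^[k] x))
      atTop (𝓝 (∫ y, h y ∂ν))

/-!
Writing `f = dm/dμ`, conformality gives `m(T(A)) = ∫_A e^φ dm = ∫_A e^φ f dμ`, and the density
gives `m(T(A)) = ∫_{T(A)} f dμ`. So both claims are instances of one fact: at a `μ`-generic point
the Birkhoff averages of `g · 1_B`, for `g` continuous and `μ(∂B) = 0`, tend to `∫_B g dμ`. Such a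
function is squeezed between continuous functions whose `μ`-integrals are arbitrarily close (the
indicator is approximated from above by thickened indicators of `closure B` and from below by
one minus those of `closure Bᶜ`), and averages of the squeezing functions converge by genericity.
-/

/-- `μ`-Riemann integrability, in the form of a squeeze between continuous functions. -/
def IsRiemannIntegrable {X : Type*} [TopologicalSpace X] [MeasurableSpace X]
    (μ : Measure X) (h : X → ℝ) : Prop :=
  ∀ ε > 0, ∃ u v : X → ℝ, Continuous u ∧ Continuous v ∧ Integrable u μ ∧ Integrable v μ ∧
    u ≤ h ∧ h ≤ v ∧ ∫ y, (v y - u y) ∂μ < ε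

section BirkhoffAverage

variable {α : Type*}

theorem birkhoffAverage_eq_one_div_mul_sum (f : α → α) (g : α → ℝ) (n : ℕ) (x : α) :
    birkhoffAverage ℝ f g n x = 1 / (n : ℝ) * ∑ k ∈ Finset.range n, g (f^[k] x) := by
  rw [birkhoffAverage, birkhoffSum, smul_eq_mul, one_div]

theorem birkhoffAverage_mono {f : α → α} {g g' : α → ℝ} (h : g ≤ g') (n : ℕ) (x : α) :
    birkhoffAverage ℝ f g n x ≤ birkhoffAverage ℝ f g' n x := by
  simp only [birkhoffAverage_eq_one_div_mul_sum]
  gcongr with k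
  exact h _

end BirkhoffAverage

namespace IsGeneric

variable {X : Type*} [TopologicalSpace X] [MeasurableSpace X] {T : X → X} {μ : Measure X} {x : X}

theorem tendsto_birkhoffAverage (hx : IsGeneric T μ x) {g : X → ℝ} (hg : Continuous g) :
    Tendsto (birkhoffAverage ℝ T g · x) atTop (𝓝 (∫ y, g y ∂μ)) := by
  simpa only [birkhoffAverage_eq_one_div_mul_sum] using hx g hg

theorem tendsto_birkhoffAverage_of_isRiemannIntegrable (hx : IsGeneric T μ x) {h : X → ℝ}
    (hh : Integrable h μ) (hR : IsRiemannIntegrable μ h) :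
    Tendsto (birkhoffAverage ℝ T h · x) atTop (𝓝 (∫ y, h y ∂μ)) := by
  refine tendsto_order.2 ⟨fun a ha => ?_, fun b hb => ?_⟩
  · obtain ⟨u, v, hu, -, hui, hvi, hu_le, hv_ge, hint⟩ := hR _ (sub_pos.2 ha)
    have hau : a < ∫ y, u y ∂μ := by
      rw [integral_sub hvi hui] at hint
      linarith [integral_mono hh hvi hv_ge]
    filter_upwards [(hx.tendsto_birkhoffAverage hu).eventually (lt_mem_nhds hau)] with n hn
    exact hn.trans_le (birkhoffAverage_mono hu_le n x)
  · obtain ⟨u, v, -, hv, hui, hvi, hu_le, hv_ge, hint⟩ := hR _ (sub_pos.2 hb)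
    have hvb : ∫ y, v y ∂μ < b := by
      rw [integral_sub hvi hui] at hint
      linarith [integral_mono hui hh hu_le]
    filter_upwards [(hx.tendsto_birkhoffAverage hv).eventually (gt_mem_nhds hvb)] with n hn
    exact (birkhoffAverage_mono hv_ge n x).trans_lt hn

end IsGeneric

section NullFrontier

variable {X : Type*} [PseudoMetricSpace X] [MeasurableSpace X] [OpensMeasurableSpace X]
  {μ : Measure X} [IsFiniteMeasure μ]

variable (μ) in
theorem exists_continuous_indicator_le_integral_lt (s : Set X) {ε : ℝ} (hε : 0 < ε) :
    ∃ v : X → ℝ, Continuous v ∧ Integrable v μ ∧ (s.indicator fun _ => 1) ≤ v ∧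
      ∫ y, v y ∂μ < μ.real (closure s) + ε := by
  have hδ (n : ℕ) : (0 : ℝ) < 1 / (n + 1) := Nat.one_div_pos_of_nat
  have h_lim := tendsto_integral_thickenedIndicator_of_isClosed μ (isClosed_closure (s := s)) hδ
    tendsto_one_div_add_atTop_nhds_zero_nat
  obtain ⟨n, hn⟩ := (h_lim.eventually (gt_mem_nhds (lt_add_of_pos_right _ hε))).exists
  refine ⟨fun y => thickenedIndicator (hδ n) (closure s) y, by fun_prop,
    integrable_thickenedIndicator _ (hδ n), fun y => ?_, hn⟩
  by_cases hy : y ∈ s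
  · simp only [Set.indicator_of_mem hy, thickenedIndicator_one (hδ n) _ (subset_closure hy),
      NNReal.coe_one, le_refl]
  · simp [hy]

theorem isRiemannIntegrable_indicator_of_null_frontier {s : Set X} (hs : μ (frontier s) = 0) :
    IsRiemannIntegrable μ (s.indicator fun _ => 1) := by
  intro ε hε
  obtain ⟨v, hv, hvi, hsv, hvε⟩ := exists_continuous_indicator_le_integral_lt μ s (half_pos hε)
  obtain ⟨w, hw, hwi, hsw, hwε⟩ := exists_continuous_indicator_le_integral_lt μ sᶜ (half_pos hε)
  have hui : Integrable (fun y => 1 - w y) μ := (integrable_const 1).sub hwi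
  refine ⟨fun y => 1 - w y, v, continuous_const.sub hw, hv, hui, hvi, fun y => ?_, hsv, ?_⟩
  · have := hsw y
    by_cases hy : y ∈ s <;> simp_all
  · have h_closure : μ.real (closure s) = μ.real (interior s) := by
      simp only [measureReal_def, measure_closure_of_null_frontier hs,
        measure_interior_of_null_frontier hs]
    have h_compl : μ.real (closure sᶜ) = μ.real Set.univ - μ.real (interior s) := by
      rw [closure_compl, measureReal_compl isOpen_interior.measurableSet]
    rw [integral_sub hvi hui, integral_sub (integrable_const 1) hwi,
      integral_const, smul_eq_mul, mul_one]
    linarith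

end NullFrontier

theorem IsRiemannIntegrable.continuous_mul {X : Type*} [TopologicalSpace X] [CompactSpace X]
    [MeasurableSpace X] [OpensMeasurableSpace X] {μ : Measure X} {g h : X → ℝ}
    (hR : IsRiemannIntegrable μ h) (hg : Continuous g) :
    IsRiemannIntegrable μ (fun y => g y * h y) := by
  set G := BoundedContinuousFunction.mkOfCompact ⟨g, hg⟩
  set M := ‖G‖
  have hM (y : X) : |g y| ≤ M := G.norm_coe_le_norm y
  have hM₀ : 0 ≤ M := norm_nonneg G
  intro ε hε
  obtain ⟨u, v, hu, hv, hui, hvi, hu_le, hv_ge, hint⟩ := hR (ε / (2 * M + 1)) (by positivity)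
  have hgv : Integrable (fun y => g y * v y) μ :=
    hvi.bdd_mul hg.aestronglyMeasurable (ae_of_all _ hM)
  have hvu : Integrable (fun y => M * (v y - u y)) μ := (hvi.sub hui).const_mul M
  have hclose (y : X) : |g y * h y - g y * v y| ≤ M * (v y - u y) := by
    rw [← mul_sub, abs_mul, abs_sub_comm, abs_of_nonneg (sub_nonneg.2 (hv_ge y))]
    exact mul_le_mul (hM y) (by linarith [hu_le y]) (sub_nonneg.2 (hv_ge y)) hM₀
  refine ⟨fun y => g y * v y - M * (v y - u y), fun y => g y * v y + M * (v y - u y),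
    by fun_prop, by fun_prop, hgv.sub hvu, hgv.add hvu,
    fun y => by linarith [(abs_le.1 (hclose y)).1],
    fun y => by linarith [(abs_le.1 (hclose y)).2], ?_⟩
  calc ∫ y, (g y * v y + M * (v y - u y) - (g y * v y - M * (v y - u y))) ∂μ
      = 2 * M * ∫ y, (v y - u y) ∂μ := by
        rw [← integral_const_mul]
        exact integral_congr_ae (ae_of_all _ fun y => by ring)
    _ ≤ 2 * M * (ε / (2 * M + 1)) := by gcongr
    _ < ε := by
        rw [mul_div_assoc', div_lt_iff₀ (by positivity)]
        nlinarith

theorem IsGeneric.tendsto_birkhoffAverage_mul_indicator {X : Type*} [PseudoMetricSpace X]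
    [CompactSpace X] [MeasurableSpace X] [OpensMeasurableSpace X] {T : X → X}
    {μ : Measure X} [IsFiniteMeasure μ] {x : X} (hx : IsGeneric T μ x) {g : X → ℝ}
    (hg : Continuous g) {B : Set X} (hB : MeasurableSet B) (hfr : μ (frontier B) = 0) :
    Tendsto (birkhoffAverage ℝ T (fun y => g y * B.indicator (fun _ => 1) y) · x) atTop
      (𝓝 (∫ y in B, g y ∂μ)) := by
  have hgB : (fun y => g y * B.indicator (fun _ => 1) y) = B.indicator g := by
    ext y
    by_cases hy : y ∈ B <;> simp [hy]
  have hgi : Integrable g μ := (BoundedContinuousFunction.mkOfCompact ⟨g, hg⟩).integrable μ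
  rw [hgB, ← integral_indicator hB]
  exact hx.tendsto_birkhoffAverage_of_isRiemannIntegrable (hgi.indicator hB)
    (hgB ▸ (isRiemannIntegrable_indicator_of_null_frontier hfr).continuous_mul hg)

theorem ae_nonneg_of_forall_measure_eq_setLIntegral {X : Type*} [MeasurableSpace X]
    {m μ : Measure X} (hμm : μ ≪ m) {f : X → ℝ} (hf : Measurable f)
    (hdens : ∀ E : Set X, MeasurableSet E → m E = ∫⁻ x in E, ENNReal.ofReal (f x) ∂μ) :
    0 ≤ᵐ[μ] f := by
  have hneg : MeasurableSet {y | f y < 0} := measurableSet_lt hf measurable_const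
  have hm_neg : m {y | f y < 0} = 0 := by
    rw [hdens _ hneg, setLIntegral_congr_fun hneg fun y hy => ENNReal.ofReal_eq_zero.2 hy.le,
      lintegral_zero]
  filter_upwards [measure_eq_zero_iff_ae_notMem.1 (hμm hm_neg)] with y hy
  exact not_lt.1 hy

theorem fundamental_equation_along_generic_orbit_general
    {X : Type*} [MetricSpace X] [CompactSpace X] [MeasurableSpace X] [BorelSpace X]
    (T : X → X) (φ : X → ℝ) (hφ : Continuous φ)
    (m μ : Measure X) [IsProbabilityMeasure μ]
    (hm : IsConformal T φ m)
    (hequiv : μ ≪ m ∧ m ≪ μ)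
    (f : X → ℝ) (hf : Continuous f)
    (hdens : ∀ E : Set X, MeasurableSet E → m E = ∫⁻ x in E, ENNReal.ofReal (f x) ∂μ)
    (A : Set X) (hA : MeasurableSet A) (hinj : Set.InjOn T A)
    (hTA : MeasurableSet (T '' A))
    (hfrA : μ (frontier A) = 0) (hfrTA : μ (frontier (T '' A)) = 0) :
    ∀ x : X, IsGeneric T μ x →
      Tendsto (fun n : ℕ => (1 / (n : ℝ)) * ∑ k ∈ Finset.range n,
          f (T^[k] x) * Set.indicator (T '' A) (fun _ => (1 : ℝ)) (T^[k] x))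
        atTop (𝓝 (m (T '' A)).toReal) ∧
      Tendsto (fun n : ℕ => (1 / (n : ℝ)) * ∑ k ∈ Finset.range n,
          Real.exp (φ (T^[k] x)) * f (T^[k] x)
            * Set.indicator A (fun _ => (1 : ℝ)) (T^[k] x))
        atTop (𝓝 (m (T '' A)).toReal) := by
  intro x hx
  have hf₀ : 0 ≤ᵐ[μ] f := ae_nonneg_of_forall_measure_eq_setLIntegral hequiv.1 hf.measurable hdens
  have hm_eq : m = μ.withDensity fun y => ENNReal.ofReal (f y) :=
    Measure.ext fun E hE => by rw [hdens E hE, withDensity_apply _ hE]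
  have hTA_val : ∫ y in T '' A, f y ∂μ = (m (T '' A)).toReal := by
    rw [hdens _ hTA, integral_eq_lintegral_of_nonneg_ae (ae_restrict_of_ae hf₀)
      hf.aestronglyMeasurable.restrict]
  have hA_val : ∫ y in A, Real.exp (φ y) * f y ∂μ = (m (T '' A)).toReal := by
    rw [hm A hA hinj hTA, hm_eq, setIntegral_withDensity_eq_setIntegral_toReal_smul
      hf.measurable.ennreal_ofReal (ae_of_all _ fun _ => ENNReal.ofReal_lt_top) _ hA]
    refine integral_congr_ae ?_
    filter_upwards [ae_restrict_of_ae hf₀] with y hy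
    rw [ENNReal.toReal_ofReal hy, smul_eq_mul, mul_comm]
  exact ⟨by simpa only [birkhoffAverage_eq_one_div_mul_sum, hTA_val] using
      hx.tendsto_birkhoffAverage_mul_indicator hf hTA hfrTA,
    by simpa only [birkhoffAverage_eq_one_div_mul_sum, hA_val] using
      hx.tendsto_birkhoffAverage_mul_indicator (g := fun y => Real.exp (φ y) * f y)
        (by fun_prop) hA hfrA⟩

/-- For a conformal measure `m` with continuous density `f = dm/dμ` with respect to the
invariant measure `μ`, and a Borel set `A` (with `T` injective on `A`, `T(A)` Borel, and
`∂A`, `∂T(A)` of `μ`-measure zero), along the orbit of any `μ`-generic point the Birkhoff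
averages of `f·1_{T(A)}` and of `e^φ·f·1_A` both converge to `m(T(A))`. -/
theorem fundamental_equation_along_generic_orbit
    {X : Type*} [MetricSpace X] [CompactSpace X] [MeasurableSpace X] [BorelSpace X]
    (T : X → X) (hT : Continuous T) (φ : X → ℝ) (hφ : Continuous φ)
    (m μ : Measure X) [IsProbabilityMeasure m] [IsProbabilityMeasure μ]
    (hm : IsConformal T φ m)
    (hμinv : ∀ E : Set X, MeasurableSet E → μ (T ⁻¹' E) = μ E)
    (hequiv : μ ≪ m ∧ m ≪ μ)
    (f : X → ℝ) (hf : Continuous f)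
    (hdens : ∀ E : Set X, MeasurableSet E → m E = ∫⁻ x in E, ENNReal.ofReal (f x) ∂μ)
    (A : Set X) (hA : MeasurableSet A) (hinj : Set.InjOn T A)
    (hTA : MeasurableSet (T '' A))
    (hfrA : μ (frontier A) = 0) (hfrTA : μ (frontier (T '' A)) = 0) :
    ∀ x : X, IsGeneric T μ x →
      Tendsto (fun n : ℕ => (1 / (n : ℝ)) * ∑ k ∈ Finset.range n,
          f (T^[k] x) * Set.indicator (T '' A) (fun _ => (1 : ℝ)) (T^[k] x))
        atTop (𝓝 (m (T '' A)).toReal) ∧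
      Tendsto (fun n : ℕ => (1 / (n : ℝ)) * ∑ k ∈ Finset.range n,
          Real.exp (φ (T^[k] x)) * f (T^[k] x)
            * Set.indicator A (fun _ => (1 : ℝ)) (T^[k] x))
        atTop (𝓝 (m (T '' A)).toReal) :=
  fundamental_equation_along_generic_orbit_general T φ hφ m μ hm hequiv f hf hdens A hA hinj hTA
    hfrA hfrTA
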